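/- arXiv:2101.07055 — 5 statements merged into one kernel-verified Lean document; each statement's English description precedes it below -/
import Mathlib

section
/- Let s, y ∈ ℝⁿ be nonzero vectors with yᵀs ≠ 0, and define H = I − (y sᵀ + s yᵀ)/(yᵀs) + 2 (yᵀy)/(yᵀs)² · s sᵀ and B = I − (s sᵀ)/(sᵀs) + (y yᵀ)/(yᵀy). Then H and B are mutually inverse: H·B = I and B·H = I. -/
open Matrix

lemma vmv_mul {n : ℕ} (u v w x : Fin n → ℝ) :
    vecMulVec u v * vecMulVec w x = (v ⬝ᵥ w) • vecMulVec u x := by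
  ext i j
  simp only [Matrix.mul_apply, vecMulVec_apply, Matrix.smul_apply, dotProduct, smul_eq_mul,
    Finset.sum_mul]
  exact Finset.sum_congr rfl fun k _ => by ring

/-- The L-BFGS matrices `H` and `B` are mutually inverse. -/
theorem stmt_4 {n : ℕ} (s y : Fin n → ℝ) (hs : s ≠ 0) (hy : y ≠ 0) (hys : y ⬝ᵥ s ≠ 0)
    (H B : Matrix (Fin n) (Fin n) ℝ)
    (hH : H = 1 - (y ⬝ᵥ s)⁻¹ • (vecMulVec y s + vecMulVec s y)
        + (2 * (y ⬝ᵥ y) / (y ⬝ᵥ s) ^ 2) • vecMulVec s s)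
    (hB : B = 1 - (s ⬝ᵥ s)⁻¹ • vecMulVec s s + (y ⬝ᵥ y)⁻¹ • vecMulVec y y) :
    H * B = 1 ∧ B * H = 1 := by
  have hss : s ⬝ᵥ s ≠ 0 := fun h => hs (by simpa using dotProduct_self_eq_zero.mp h)
  have hyy : y ⬝ᵥ y ≠ 0 := fun h => hy (by simpa using dotProduct_self_eq_zero.mp h)
  have hsy : s ⬝ᵥ y = y ⬝ᵥ s := dotProduct_comm s y
  subst hH hB
  constructor <;>
  · simp only [sub_mul, mul_sub, add_mul, mul_add, Matrix.smul_mul, Matrix.mul_smul,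
      one_mul, mul_one, vmv_mul, smul_smul, hsy]
    match_scalars <;> field_simp <;> ring
end

section
/- Let s, y ∈ ℝⁿ with yᵀs ≠ 0, and define H = I − (y sᵀ + s yᵀ)/(yᵀs) + 2 (yᵀy)/(yᵀs)² · s sᵀ. Then H is a symmetric positive definite matrix: Hᵀ = H and zᵀHz > 0 for every nonzero z ∈ ℝⁿ. -/
/-!
With `ρ = (yᵀs)⁻¹` and `t = ρ (sᵀz)`, the quadratic form of `H` is a sum of squares,
`zᵀHz = ‖z - t y‖² + t² ‖y‖²`. If `t = 0` the first term is `‖z‖² > 0`; otherwise the second is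
positive, because `yᵀs ≠ 0` forces `y ≠ 0`.
-/

open Matrix

variable {ι R : Type*} [Fintype ι]

section CommRing

variable [CommRing R]

/-- `ρ` plays the role of `(yᵀs)⁻¹`. -/
def lbfgsMatrix [DecidableEq ι] (ρ : R) (s y : ι → R) : Matrix ι ι R :=
  1 - ρ • (vecMulVec y s + vecMulVec s y) + (2 * ρ ^ 2 * (y ⬝ᵥ y)) • vecMulVec s s

theorem transpose_lbfgsMatrix [DecidableEq ι] (ρ : R) (s y : ι → R) :
    (lbfgsMatrix ρ s y)ᵀ = lbfgsMatrix ρ s y := by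
  simp only [lbfgsMatrix, transpose_add, transpose_sub, transpose_smul, transpose_one,
    transpose_vecMulVec, add_comm (vecMulVec s y)]

theorem dotProduct_vecMulVec_mulVec (u v z : ι → R) :
    z ⬝ᵥ (vecMulVec u v *ᵥ z) = (u ⬝ᵥ z) * (v ⬝ᵥ z) := by
  rw [vecMulVec_mulVec, op_smul_eq_smul, dotProduct_smul, smul_eq_mul, mul_comm, dotProduct_comm]

theorem dotProduct_lbfgsMatrix_mulVec [DecidableEq ι] (ρ : R) (s y z : ι → R) :
    z ⬝ᵥ (lbfgsMatrix ρ s y *ᵥ z) =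
      (z - (ρ * (s ⬝ᵥ z)) • y) ⬝ᵥ (z - (ρ * (s ⬝ᵥ z)) • y) + (ρ * (s ⬝ᵥ z)) ^ 2 * (y ⬝ᵥ y) := by
  simp only [lbfgsMatrix, add_mulVec, sub_mulVec, smul_mulVec, one_mulVec,
    dotProduct_add, dotProduct_sub, sub_dotProduct, dotProduct_smul, smul_dotProduct, smul_eq_mul,
    dotProduct_vecMulVec_mulVec, dotProduct_comm z y]
  ring

end CommRing

theorem dotProduct_self_sub_smul_add_sq_mul_pos [CommRing R] [LinearOrder R]
    [IsStrictOrderedRing R] {y z : ι → R} (hy : y ≠ 0) (hz : z ≠ 0) (t : R) :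
    0 < (z - t • y) ⬝ᵥ (z - t • y) + t ^ 2 * (y ⬝ᵥ y) := by
  have self_pos {v : ι → R} (hv : v ≠ 0) : 0 < v ⬝ᵥ v :=
    (Finset.sum_nonneg fun i _ => mul_self_nonneg (v i)).lt_of_ne'
      (dotProduct_self_eq_zero.not.mpr hv)
  rcases eq_or_ne t 0 with rfl | ht
  · simpa using self_pos hz
  · exact add_pos_of_nonneg_of_pos (Finset.sum_nonneg fun i _ => mul_self_nonneg _)
      (mul_pos (by positivity) (self_pos hy))

/-- The L-BFGS matrix `H` is symmetric positive definite (Lemma 1(i)). -/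
theorem stmt_5 {n : ℕ} (s y : Fin n → ℝ) (hys : y ⬝ᵥ s ≠ 0)
    (H : Matrix (Fin n) (Fin n) ℝ)
    (hH : H = 1 - (y ⬝ᵥ s)⁻¹ • (vecMulVec y s + vecMulVec s y)
        + (2 * (y ⬝ᵥ y) / (y ⬝ᵥ s) ^ 2) • vecMulVec s s) :
    Hᵀ = H ∧ ∀ z : Fin n → ℝ, z ≠ 0 → 0 < z ⬝ᵥ (H *ᵥ z) := by
  have hy : y ≠ 0 := by
    rintro rfl
    exact hys (zero_dotProduct s)
  obtain rfl : H = lbfgsMatrix (y ⬝ᵥ s)⁻¹ s y := by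
    rw [hH, lbfgsMatrix, div_eq_mul_inv, ← inv_pow]
    ring_nf
  refine ⟨transpose_lbfgsMatrix _ s y, fun z hz => ?_⟩
  rw [dotProduct_lbfgsMatrix_mulVec]
  exact dotProduct_self_sub_smul_add_sq_mul_pos hy hz _
end

section
/- Let s, y ∈ ℝⁿ with yᵀs ≠ 0, and define H = I − (y sᵀ + s yᵀ)/(yᵀs) + 2 (yᵀy)/(yᵀs)² · s sᵀ. Then every eigenvalue of H is greater than 1/2; equivalently, zᵀHz > (1/2)‖z‖² for every nonzero z ∈ ℝⁿ. -/
open Matrix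

lemma aux_dp_nonneg {n : ℕ} (z : Fin n → ℝ) : 0 ≤ z ⬝ᵥ z :=
  Finset.sum_nonneg fun i _ => mul_self_nonneg (z i)

lemma aux_vecMulVec_mulVec {n : ℕ} (u v z : Fin n → ℝ) :
    vecMulVec u v *ᵥ z = (v ⬝ᵥ z) • u := by
  funext i
  simp [vecMulVec_apply, mulVec, dotProduct, Finset.mul_sum, mul_assoc, mul_comm,
    mul_left_comm, Finset.sum_mul]

lemma aux_quad_form {n : ℕ} (s y z : Fin n → ℝ) (H : Matrix (Fin n) (Fin n) ℝ)
    (hH : H = 1 - (y ⬝ᵥ s)⁻¹ • (vecMulVec y s + vecMulVec s y)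
        + (2 * (y ⬝ᵥ y) / (y ⬝ᵥ s) ^ 2) • vecMulVec s s) :
    z ⬝ᵥ (H *ᵥ z) = z ⬝ᵥ z - (y ⬝ᵥ s)⁻¹ * ((s ⬝ᵥ z) * (z ⬝ᵥ y) + (y ⬝ᵥ z) * (z ⬝ᵥ s))
      + (2 * (y ⬝ᵥ y) / (y ⬝ᵥ s) ^ 2) * ((s ⬝ᵥ z) * (z ⬝ᵥ s)) := by
  subst hH
  simp [add_mulVec, sub_mulVec, smul_mulVec, aux_vecMulVec_mulVec,
    dotProduct_add, dotProduct_sub, dotProduct_smul, smul_eq_mul]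
  ring

/-- The key strict inequality for nonzero vectors `z` (as plain functions). -/
lemma aux_key {n : ℕ} (s y : Fin n → ℝ) (hys : y ⬝ᵥ s ≠ 0)
    (H : Matrix (Fin n) (Fin n) ℝ)
    (hH : H = 1 - (y ⬝ᵥ s)⁻¹ • (vecMulVec y s + vecMulVec s y)
        + (2 * (y ⬝ᵥ y) / (y ⬝ᵥ s) ^ 2) • vecMulVec s s)
    (z : Fin n → ℝ) (hz : z ≠ 0) :
    (1 / 2) * (z ⬝ᵥ z) < z ⬝ᵥ (H *ᵥ z) := by
  set c : ℝ := y ⬝ᵥ s with hc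
  set w : Fin n → ℝ := z - (2 * (s ⬝ᵥ z) / c) • y with hw
  have hwne : w ≠ 0 := by
    intro h
    have hzval : z = (2 * (s ⬝ᵥ z) / c) • y := by
      have := sub_eq_zero.mp h
      simpa using this
    have hb : s ⬝ᵥ z = 2 * (s ⬝ᵥ z) / c * (s ⬝ᵥ y) := by
      conv_lhs => rw [hzval]
      simp [dotProduct_smul, smul_eq_mul]
    rw [dotProduct_comm s y, ← hc] at hb
    have hb0 : s ⬝ᵥ z = 0 := by
      field_simp at hb
      linarith
    rw [hb0] at hzval
    simp at hzval
    exact hz hzval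
  have hwpos : 0 < w ⬝ᵥ w := by
    rcases (aux_dp_nonneg w).lt_or_eq with h | h
    · exact h
    · exact absurd ((dotProduct_self_eq_zero).mp h.symm) hwne
  have hident : z ⬝ᵥ (H *ᵥ z) = (z ⬝ᵥ z + w ⬝ᵥ w) / 2 := by
    rw [aux_quad_form s y z H hH]
    rw [← hc]
    have hww : w ⬝ᵥ w = z ⬝ᵥ z - (2 * (s ⬝ᵥ z) / c) * (z ⬝ᵥ y)
        - (2 * (s ⬝ᵥ z) / c) * (y ⬝ᵥ z) + (2 * (s ⬝ᵥ z) / c) ^ 2 * (y ⬝ᵥ y) := by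
      rw [hw]
      simp only [dotProduct_sub, sub_dotProduct, smul_dotProduct, dotProduct_smul,
        smul_eq_mul]
      ring
    rw [hww]
    have hyz : y ⬝ᵥ z = z ⬝ᵥ y := dotProduct_comm y z
    have hsz : s ⬝ᵥ z = z ⬝ᵥ s := dotProduct_comm s z
    rw [hyz, hsz]
    field_simp
    ring
  rw [hident]
  have hzz : 0 ≤ z ⬝ᵥ z := aux_dp_nonneg z
  linarith

/-- Every eigenvalue of the L-BFGS matrix `H` is greater than `1/2`;
equivalently `zᵀHz > (1/2)‖z‖²` for every nonzero `z` (Lemma 1(ii)). -/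
theorem stmt_6 {n : ℕ} (s y : Fin n → ℝ) (hys : y ⬝ᵥ s ≠ 0)
    (H : Matrix (Fin n) (Fin n) ℝ)
    (hH : H = 1 - (y ⬝ᵥ s)⁻¹ • (vecMulVec y s + vecMulVec s y)
        + (2 * (y ⬝ᵥ y) / (y ⬝ᵥ s) ^ 2) • vecMulVec s s) :
    (∀ μ : ℝ, Module.End.HasEigenvalue (Matrix.toLin' H) μ → 1 / 2 < μ) ∧
      ∀ z : EuclideanSpace ℝ (Fin n), z ≠ 0 → (1 / 2) * ‖z‖ ^ 2 < z ⬝ᵥ (H *ᵥ z) := by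
  have norm_eq : ∀ z : EuclideanSpace ℝ (Fin n), ‖z‖ ^ 2 = (z : Fin n → ℝ) ⬝ᵥ z := by
    intro z
    rw [← real_inner_self_eq_norm_sq]
    simp [PiLp.inner_apply, dotProduct]
    rw [EuclideanSpace.norm_sq_eq]
    simp [sq]
  constructor
  · intro μ hμ
    obtain ⟨v, hv⟩ := hμ.exists_hasEigenvector
    have hv0 : v ≠ 0 := hv.right
    have happ : H *ᵥ v = μ • v := by
      have := hv.apply_eq_smul
      simpa [Matrix.toLin'_apply] using this
    have hkey := aux_key s y hys H hH v (by
      intro h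
      apply hv0
      ext i
      exact congrFun h i)
    rw [happ] at hkey
    have hμv : v ⬝ᵥ (μ • v) = μ * (v ⬝ᵥ v) := by
      simp [dotProduct_smul, smul_eq_mul]
    rw [hμv] at hkey
    have hvv : 0 < v ⬝ᵥ v := by
      rcases (aux_dp_nonneg v).lt_or_eq with h | h
      · exact h
      · exact absurd ((dotProduct_self_eq_zero).mp h.symm) (by
          intro h'
          apply hv0
          ext i
          exact congrFun h' i)
    nlinarith
  · intro z hz
    rw [norm_eq z]
    exact aux_key s y hys H hH z (by
      intro h
      apply hz
      ext i
      exact congrFun h i)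
end

section
/- Let n ≥ 2 and let s, y ∈ ℝⁿ be linearly independent with yᵀs ≠ 0. Define H = I − (y sᵀ + s yᵀ)/(yᵀs) + 2 (yᵀy)/(yᵀs)² · s sᵀ and c = (yᵀy)(sᵀs)/(yᵀs)². Then the characteristic polynomial of H equals (X − 1)^{n−2} · (X² − 2cX + c); in particular H has the eigenvalue 1 with multiplicity at least n−2, and its two remaining eigenvalues μ₁, μ₂ satisfy μ₁ + μ₂ = 2c and μ₁μ₂ = c. -/
open Matrix Polynomial

set_option maxHeartbeats 1000000
set_option synthInstance.maxHeartbeats 400000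

/-- Characteristic polynomial of the L-BFGS matrix `H`:
`χ_H(X) = (X-1)^{n-2} (X² - 2cX + c)` with `c = (yᵀy)(sᵀs)/(yᵀs)²`,
when `s` and `y` are linearly independent. -/
theorem stmt_7 {n : ℕ} (hn : 2 ≤ n) (s y : Fin n → ℝ)
    (hli : LinearIndependent ℝ ![s, y]) (hys : y ⬝ᵥ s ≠ 0)
    (H : Matrix (Fin n) (Fin n) ℝ)
    (hH : H = 1 - (y ⬝ᵥ s)⁻¹ • (vecMulVec y s + vecMulVec s y)
        + (2 * (y ⬝ᵥ y) / (y ⬝ᵥ s) ^ 2) • vecMulVec s s)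
    (c : ℝ) (hc : c = (y ⬝ᵥ y) * (s ⬝ᵥ s) / (y ⬝ᵥ s) ^ 2) :
    H.charpoly = (X - 1) ^ (n - 2) * (X ^ 2 - C (2 * c) * X + C c) := by
  classical
  set f : ℝ[X] →+* RatFunc ℝ := (algebraMap ℝ[X] (RatFunc ℝ) : ℝ[X] →+* RatFunc ℝ) with hf
  have hfinj : Function.Injective f := RatFunc.algebraMap_injective ℝ
  set r : ℝ →+* RatFunc ℝ := (algebraMap ℝ (RatFunc ℝ) : ℝ →+* RatFunc ℝ) with hr
  have hrC : ∀ x : ℝ, f (C x) = r x := fun x =>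
    (IsScalarTower.algebraMap_apply ℝ ℝ[X] (RatFunc ℝ) x).symm
  set t : RatFunc ℝ := f (X - 1) with ht
  have htne : t ≠ 0 := by
    rw [ht, Ne, ← map_zero f, hfinj.eq_iff]
    intro h
    have h1 : (X : ℝ[X]) - 1 ≠ 0 := by simpa using X_sub_C_ne_zero (1 : ℝ)
    exact h1 h
  set a : Fin n → ℝ := fun j => -(y ⬝ᵥ s)⁻¹ * y j + (2 * (y ⬝ᵥ y) / (y ⬝ᵥ s) ^ 2) * s j with ha
  set b : Fin n → ℝ := fun j => -(y ⬝ᵥ s)⁻¹ * s j with hb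
  set M : Matrix (Fin n) (Fin 2) (RatFunc ℝ) :=
    Matrix.of (fun i k => r (if k = 0 then s i else y i)) with hM
  set N : Matrix (Fin 2) (Fin n) (RatFunc ℝ) :=
    Matrix.of (fun k j => r (if k = 0 then a j else b j)) with hN
  have hMN : ∀ i j, (M * N) i j = r (s i * a j + y i * b j) := by
    intro i j
    simp [hM, hN, Matrix.mul_apply, Fin.sum_univ_two]
  have key1 : (charmatrix H).map f
      = t • (1 : Matrix (Fin n) (Fin n) (RatFunc ℝ)) - M * N := by
    ext i j
    rcases eq_or_ne i j with rfl | hij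
    · rw [Matrix.map_apply, charmatrix_apply_eq, Matrix.sub_apply, Matrix.smul_apply,
        Matrix.one_apply_eq, hMN, map_sub, hrC, ht, map_sub, _root_.map_one,
        smul_eq_mul, mul_one]
      have hH' : H i i = 1 + (s i * a i + y i * b i) := by
        simp only [hH, ha, hb, Matrix.add_apply, Matrix.sub_apply, Matrix.smul_apply,
          Matrix.one_apply_eq, vecMulVec_apply, smul_eq_mul]
        ring
      rw [hH', map_add, _root_.map_one]
      ring
    · rw [Matrix.map_apply, charmatrix_apply_ne _ _ _ hij, Matrix.sub_apply, Matrix.smul_apply,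
        Matrix.one_apply_ne hij, hMN, map_neg, hrC, smul_eq_mul, mul_zero, zero_sub]
      have hH' : H i j = s i * a j + y i * b j := by
        simp only [hH, ha, hb, Matrix.add_apply, Matrix.sub_apply, Matrix.smul_apply,
          Matrix.one_apply_ne hij, vecMulVec_apply, smul_eq_mul]
        ring
      rw [hH']
  have hexp : ∀ v : Fin n → ℝ, a ⬝ᵥ v
      = -(y ⬝ᵥ s)⁻¹ * (y ⬝ᵥ v) + (2 * (y ⬝ᵥ y) / (y ⬝ᵥ s) ^ 2) * (s ⬝ᵥ v) := by
    intro v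
    simp [ha, dotProduct, add_mul, Finset.sum_add_distrib, Finset.mul_sum, mul_assoc]
  have hbexp : ∀ v : Fin n → ℝ, b ⬝ᵥ v = -(y ⬝ᵥ s)⁻¹ * (s ⬝ᵥ v) := by
    intro v
    simp [hb, dotProduct, Finset.mul_sum, mul_assoc]
  have has : a ⬝ᵥ s = 2 * c - 1 := by
    rw [hexp, hc]; field_simp; ring
  have hay : a ⬝ᵥ y = (y ⬝ᵥ y) / (y ⬝ᵥ s) := by
    rw [hexp, dotProduct_comm s y]; field_simp; ring
  have hbs : b ⬝ᵥ s = -((s ⬝ᵥ s) / (y ⬝ᵥ s)) := by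
    rw [hbexp]; field_simp
  have hby : b ⬝ᵥ y = -1 := by
    rw [hbexp, dotProduct_comm s y]; field_simp
  have hNM : ∀ k l, (N * M) k l
      = r ((if k = 0 then a else b) ⬝ᵥ (if l = 0 then s else y)) := by
    intro k l
    simp only [hM, hN, Matrix.mul_apply, Matrix.of_apply, dotProduct, map_sum, _root_.map_mul]
    congr 1; ext j
    fin_cases k <;> fin_cases l <;> simp
  have hdet2 : Matrix.det (1 + (-t⁻¹) • (N * M))
      = (1 + (-t⁻¹) * r (2 * c - 1)) * (1 + (-t⁻¹) * r (-1))
        - ((-t⁻¹) * r ((y ⬝ᵥ y) / (y ⬝ᵥ s))) * ((-t⁻¹) * r (-((s ⬝ᵥ s) / (y ⬝ᵥ s)))) := by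
    rw [Matrix.det_fin_two]
    simp only [Matrix.add_apply, Matrix.smul_apply, Matrix.one_apply_eq, Matrix.one_apply_ne,
      smul_eq_mul]
    rw [hNM, hNM, hNM, hNM]
    norm_num [has, hay, hbs, hby]
  have hcross : (y ⬝ᵥ y) / (y ⬝ᵥ s) * (s ⬝ᵥ s / (y ⬝ᵥ s)) = c := by
    rw [hc, div_mul_div_comm, ← sq]
  apply hfinj
  have hchar : H.charpoly = (charmatrix H).det := rfl
  rw [hchar, RingHom.map_det, RingHom.mapMatrix_apply, key1]
  have hfactor : t • (1 : Matrix (Fin n) (Fin n) (RatFunc ℝ)) - M * N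
      = t • (1 + ((-t⁻¹) • M) * N) := by
    have h' : t • (((-t⁻¹) • M) * N) = -(M * N) := by
      rw [Matrix.smul_mul, smul_smul, mul_neg, mul_inv_cancel₀ htne, neg_smul, one_smul]
    rw [smul_add, h', sub_eq_add_neg]
  rw [hfactor, Matrix.det_smul, Matrix.det_one_add_mul_comm, Matrix.mul_smul, hdet2]
  have hfX : f X = t + 1 := by rw [ht, map_sub, _root_.map_one]; ring
  simp only [_root_.map_mul, map_pow, map_add, map_sub, map_neg, map_ofNat, _root_.map_one,
    hrC, hfX, ← ht]
  have hc2 : r ((y ⬝ᵥ y) / (y ⬝ᵥ s)) * r ((s ⬝ᵥ s) / (y ⬝ᵥ s)) = r c := by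
    rw [← _root_.map_mul, hcross]
  obtain ⟨m, rfl⟩ : ∃ m, n = m + 2 := ⟨n - 2, (Nat.sub_add_cancel hn).symm⟩
  have hm2 : m + 2 - 2 = m := by omega
  rw [hm2, Fintype.card_fin, pow_add]
  have hprod : -t⁻¹ * r ((y ⬝ᵥ y) / (y ⬝ᵥ s)) * (-t⁻¹ * -r ((s ⬝ᵥ s) / (y ⬝ᵥ s)))
      = -(t⁻¹ * t⁻¹ * r c) := by
    rw [show -t⁻¹ * r ((y ⬝ᵥ y) / (y ⬝ᵥ s)) * (-t⁻¹ * -r ((s ⬝ᵥ s) / (y ⬝ᵥ s)))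
        = -(t⁻¹ * t⁻¹ * (r ((y ⬝ᵥ y) / (y ⬝ᵥ s)) * r ((s ⬝ᵥ s) / (y ⬝ᵥ s)))) by ring, hc2]
  rw [hprod]
  field_simp
  ring
end

section
/- Let A be a real m×n matrix with full row rank m, b ∈ ℝᵐ, and P = I − Aᵀ(AAᵀ)⁻¹A. Let f : ℝⁿ → ℝ be differentiable, let H : ℝⁿ → ℝ^{n×n} be any matrix-valued function, and let x : ℝ → ℝⁿ be differentiable with x'(t) = −P H(x(t)) P ∇f(x(t)) for all t. If A x(0) = b, then A x(t) = b for all t ∈ ℝ. -/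
/-! Since `P` projects onto `ker A`, i.e. `A * P = 0`, the velocity `-P H P ∇f` always lies in
`ker A`, so `t ↦ A x(t)` has zero derivative and is constant. -/

open Matrix

theorem Matrix.isUnit_of_rank_eq_card {ι K : Type*} [Fintype ι] [DecidableEq ι] [Field K]
    {M : Matrix ι ι K} (hM : M.rank = Fintype.card ι) : IsUnit M := by
  rw [← mulVec_surjective_iff_isUnit, ← coe_mulVecLin, ← LinearMap.range_eq_top]
  exact Submodule.eq_top_of_finrank_eq (by rw [← rank, hM, Module.finrank_fintype_fun_eq_card])

theorem Matrix.isUnit_mul_transpose_of_rank_eq {m n K : Type*} [Fintype m] [Fintype n]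
    [DecidableEq m] [Field K] [LinearOrder K] [IsStrictOrderedRing K]
    {A : Matrix m n K} (hA : A.rank = Fintype.card m) : IsUnit (A * Aᵀ) :=
  isUnit_of_rank_eq_card (by rw [rank_self_mul_transpose, hA])

theorem Matrix.mul_one_sub_transpose_mul_inv_mul {m n R : Type*} [Fintype m] [Fintype n]
    [DecidableEq m] [DecidableEq n] [CommRing R] {A : Matrix m n R} (hA : IsUnit (A * Aᵀ)) :
    A * (1 - Aᵀ * (A * Aᵀ)⁻¹ * A) = 0 := by
  rw [Matrix.mul_sub, Matrix.mul_one, ← Matrix.mul_assoc, ← Matrix.mul_assoc,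
    mul_nonsing_inv _ ((isUnit_iff_isUnit_det _).mp hA), Matrix.one_mul, sub_self]

theorem ContinuousLinearMap.apply_eq_of_hasDerivAt_apply_eq_zero {E F : Type*}
    [NormedAddCommGroup E] [NormedSpace ℝ E] [NormedAddCommGroup F] [NormedSpace ℝ F]
    (L : E →L[ℝ] F) {x v : ℝ → E} (hx : ∀ t, HasDerivAt x (v t) t) (hv : ∀ t, L (v t) = 0)
    (s t : ℝ) : L (x s) = L (x t) := by
  have hLx : ∀ t, HasDerivAt (L ∘ x) 0 t := fun t ↦ hv t ▸ L.hasFDerivAt.comp_hasDerivAt t (hx t)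
  exact is_const_of_deriv_eq_zero (fun t ↦ (hLx t).differentiableAt) (fun t ↦ (hLx t).deriv) s t

theorem stmt_9_general {m n : ℕ} (A : Matrix (Fin m) (Fin n) ℝ) (hA : A.rank = m) (b : Fin m → ℝ)
    (P : Matrix (Fin n) (Fin n) ℝ) (hP : P = 1 - Aᵀ * (A * Aᵀ)⁻¹ * A)
    (g : EuclideanSpace ℝ (Fin n) → Fin n → ℝ)
    (H : EuclideanSpace ℝ (Fin n) → Matrix (Fin n) (Fin n) ℝ)
    (x : ℝ → EuclideanSpace ℝ (Fin n))
    (hx : ∀ t : ℝ,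
      HasDerivAt x (-(WithLp.toLp 2 (P *ᵥ (H (x t) *ᵥ (P *ᵥ g (x t)))) : EuclideanSpace ℝ (Fin n))) t)
    (h0 : A *ᵥ (x 0 : Fin n → ℝ) = b) :
    ∀ t : ℝ, A *ᵥ (x t : Fin n → ℝ) = b := by
  have hAP : A * P = 0 :=
    hP ▸ mul_one_sub_transpose_mul_inv_mul (isUnit_mul_transpose_of_rank_eq (by simpa using hA))
  let L : EuclideanSpace ℝ (Fin n) →L[ℝ] Fin m → ℝ :=
    (mulVecLin A).toContinuousLinearMap ∘L (PiLp.continuousLinearEquiv 2 ℝ _).toContinuousLinearMap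
  intro t
  rw [← h0]
  refine L.apply_eq_of_hasDerivAt_apply_eq_zero hx (fun s ↦ ?_) t 0
  change A *ᵥ -(P *ᵥ _) = 0
  rw [mulVec_neg, mulVec_mulVec, hAP, zero_mulVec, neg_zero]

/-- The generalized projected gradient flow preserves the linear constraint:
if `x'(t) = -P H(x(t)) P ∇f(x(t))` and `A x(0) = b`, then `A x(t) = b` for all `t`. -/
theorem stmt_9 {m n : ℕ} (A : Matrix (Fin m) (Fin n) ℝ) (hA : A.rank = m) (b : Fin m → ℝ)
    (P : Matrix (Fin n) (Fin n) ℝ) (hP : P = 1 - Aᵀ * (A * Aᵀ)⁻¹ * A)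
    (f : EuclideanSpace ℝ (Fin n) → ℝ) (hf : Differentiable ℝ f)
    (g : EuclideanSpace ℝ (Fin n) → Fin n → ℝ) (hg : ∀ v, gradient f v = g v)
    (H : EuclideanSpace ℝ (Fin n) → Matrix (Fin n) (Fin n) ℝ)
    (x : ℝ → EuclideanSpace ℝ (Fin n))
    (hx : ∀ t : ℝ,
      HasDerivAt x (-(WithLp.toLp 2 (P *ᵥ (H (x t) *ᵥ (P *ᵥ g (x t)))) : EuclideanSpace ℝ (Fin n))) t)
    (h0 : A *ᵥ (x 0 : Fin n → ℝ) = b) :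
    ∀ t : ℝ, A *ᵥ (x t : Fin n → ℝ) = b :=
  stmt_9_general A hA b P hP g H x hx h0
end
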